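/- Let ñ = p₁···p_t be a product of distinct primes different from 2 and 3, with ñ ≡ 1 (mod 8). Define the (2t+6)×(2t+6) matrix A₁ over F₂ in block form as in the paper (rows encoding local solvability conditions at ∞, 2, 3 and the primes pᵢ for the elliptic curve E_ñ : y² = x(x+3ñ)(x−ñ)). Then the rank of A₁ over F₂ is even if ñ ≡ 1 (mod 3) (i.e. [-3/ñ] = 0) and odd if ñ ≡ 2 (mod 3) (i.e. [-3/ñ] = 1). -/

import Mathlib

open Matrix

/-- The additive Legendre (Jacobi) symbol `[n/m] ∈ 𝔽₂`. -/
def addLeg (n : ℤ) (m : ℕ) : ZMod 2 := if jacobiSym n m = 1 then 0 else 1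

/-- `r_d = ([d/p₁],…,[d/p_t])`. -/
def rvec {t : ℕ} (p : Fin t → ℕ) (d : ℤ) : Fin t → ZMod 2 := fun i => addLeg d (p i)

/-- The Rédei-type matrix `A`: `a_{ij} = [p_j/p_i]` (`i ≠ j`),
`a_{ii} = ∑_{j≠i} a_{ij}`. -/
def redeiMatrix {t : ℕ} (p : Fin t → ℕ) : Matrix (Fin t) (Fin t) (ZMod 2) :=
  Matrix.of fun i j =>
    if i = j then ∑ k ∈ Finset.univ.erase i, addLeg (p k) (p i)
    else addLeg (p j) (p i)

/-- Top-left 6×6 scalar block of the Monsky matrix `A₁`, with `e3 = [-3/ñ]`. -/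
def scalarBlockA1 (e3 : ZMod 2) : Matrix (Fin 6) (Fin 6) (ZMod 2) :=
  !![1,0,0,1,0,0;
     0,1,0,1,0,1;
     0,0,0,0,1,0;
     1,1,1,0,0,1;
     1,1,0,0,0,1+e3;
     0,0,1,0,0,0]

/-- The full Monsky matrix `A₁` for `n = ñ = p₁⋯p_t ≡ 1 (mod 8)`, in block form
with index set `Fin 6 ⊕ Fin t ⊕ Fin t` (6 scalar coordinates, then the
`y`-coordinates, then the `x`-coordinates). -/
def monskyA1 {t : ℕ} (p : Fin t → ℕ) :
    Matrix (Fin 6 ⊕ Fin t ⊕ Fin t) (Fin 6 ⊕ Fin t ⊕ Fin t) (ZMod 2) :=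
  fun i j =>
    match i, j with
    | Sum.inl i, Sum.inl j => scalarBlockA1 (addLeg (-3) (∏ k, p k)) i j
    | Sum.inl i, Sum.inr (Sum.inl j) =>
        if i = 3 then rvec p (-1) j else if i = 4 then rvec p (-3) j else 0
    | Sum.inl i, Sum.inr (Sum.inr j) =>
        if i = 1 then rvec p (-1) j else if i = 3 then rvec p 2 j else 0
    | Sum.inr (Sum.inl i), Sum.inl j =>
        if j = 3 then rvec p (-1) i else if j = 4 then rvec p 2 i
        else if j = 5 then rvec p 3 i else 0
    | Sum.inr (Sum.inl i), Sum.inr (Sum.inl j) =>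
        Matrix.diagonal (rvec p (-3)) i j
    | Sum.inr (Sum.inl i), Sum.inr (Sum.inr j) => redeiMatrix p i j
    | Sum.inr (Sum.inr i), Sum.inl j =>
        if j = 0 then rvec p (-1) i else if j = 1 then rvec p 2 i
        else if j = 2 then rvec p 3 i else 0
    | Sum.inr (Sum.inr i), Sum.inr (Sum.inl j) =>
        (redeiMatrix p + Matrix.diagonal (rvec p (-1))) i j
    | Sum.inr (Sum.inr _), Sum.inr (Sum.inr _) => 0

/-!
Over `𝔽₂` the rank of a symmetric matrix `S` is congruent to `c ⬝ diag S` whenever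
`S c = diag S`: the matrix `S - (diag S)(diag S)ᵀ` is symmetric with zero diagonal, hence of even
rank, and it differs from `S` by a rank-one update that lowers the rank by one if
`c ⬝ diag S = 1` and leaves it unchanged otherwise.
Quadratic reciprocity gives `Aᵀ = A + D₋₁ + r₋₁ r₋₁ᵀ` for the Rédei matrix (below
`ε, β, γ, δ` stand for `r₋₁, r₂, r₃, r₋₃`), so its block
`[[D₋₃, A], [A + D₋₁, 0]]` in `A₁` is symmetric up to the rank-one term `r₋₁ r₋₁ᵀ`; a
permutation of the scalar columns together with a few explicit row and column operations
turns `A₁` into a symmetric matrix `W` with `W c = diag W` and `c ⬝ diag W = ∑ᵢ [-3/pᵢ]`, which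
is `[-3/ñ]`.
-/

section RankOneUpdate

variable {K : Type*} [Field K] {m n : Type*} [Fintype m] [Fintype n]

theorem Matrix.rank_sub_vecMulVec_add_one (S : Matrix m n K) {x : n → K} {y : m → K}
    (h : y ⬝ᵥ S *ᵥ x = 1) : (S - vecMulVec (S *ᵥ x) (y ᵥ* S)).rank + 1 = S.rank := by
  set T := S - vecMulVec (S *ᵥ x) (y ᵥ* S)
  have hT : ∀ z, T *ᵥ z = S *ᵥ (z - ((y ᵥ* S) ⬝ᵥ z) • x) := fun z => by
    simp [T, sub_mulVec, vecMulVec_mulVec, mulVec_sub, mulVec_smul]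
  have hrange : LinearMap.range S.mulVecLin = LinearMap.range T.mulVecLin ⊔ K ∙ (S *ᵥ x) := by
    refine le_antisymm ?_ (sup_le ?_ ?_)
    · rintro _ ⟨z, rfl⟩
      have hz : S *ᵥ z = T *ᵥ z + ((y ᵥ* S) ⬝ᵥ z) • (S *ᵥ x) := by
        rw [hT, mulVec_sub, mulVec_smul, sub_add_cancel]
      rw [mulVecLin_apply, hz]
      exact Submodule.add_mem_sup ⟨z, rfl⟩
        (Submodule.smul_mem _ _ (Submodule.mem_span_singleton_self _))
    · rintro _ ⟨z, rfl⟩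
      exact ⟨_, (hT z).symm⟩
    · rw [Submodule.span_le, Set.singleton_subset_iff]
      exact ⟨x, rfl⟩
  have hnot : S *ᵥ x ∉ LinearMap.range T.mulVecLin := by
    rintro ⟨z, hz⟩
    have hyT : y ⬝ᵥ T *ᵥ z = 0 := by
      rw [hT, dotProduct_mulVec, dotProduct_sub, dotProduct_smul, ← dotProduct_mulVec y S x, h,
        smul_eq_mul, mul_one, sub_self]
    rw [mulVecLin_apply] at hz
    rw [hz, h] at hyT
    exact one_ne_zero hyT
  rw [Matrix.rank, Matrix.rank, hrange, Submodule.finrank_sup_span_singleton hnot]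

end RankOneUpdate

section Alternating

variable {K : Type*} [Field K] {n : Type*} [Fintype n]

/-- Two rank-one updates, through the column of `j` and then of `i`, remove the hyperbolic
plane spanned by `eᵢ, eⱼ`. -/
theorem Matrix.exists_rank_add_two_of_transpose_eq_neg [DecidableEq n] {S : Matrix n n K}
    (hS : Sᵀ = -S) (hdiag : ∀ i, S i i = 0) {i j : n} (hij : S i j ≠ 0) :
    ∃ T : Matrix n n K, Tᵀ = -T ∧ (∀ k, T k k = 0) ∧ T.rank + 2 = S.rank := by
  have hskew : ∀ k l, S l k = -S k l := fun k l => congrFun (congrFun hS k) l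
  set s := S i j
  set T₁ := S - vecMulVec (S *ᵥ Pi.single j 1) (Pi.single i s⁻¹ ᵥ* S)
  set T₂ := T₁ - vecMulVec (T₁ *ᵥ Pi.single i 1) (Pi.single j (-s⁻¹) ᵥ* T₁)
  have hT₁ : ∀ k l, T₁ k l = S k l - s⁻¹ * S k j * S i l := fun k l => by
    simp only [mulVec_single, MulOpposite.op_one, one_smul, single_vecMul, vecMulVec_smul,
      sub_apply, smul_apply, vecMulVec_apply, col_apply, row_apply, smul_eq_mul, T₁]
    ring
  have hT₂ : ∀ k l, T₂ k l = S k l - s⁻¹ * S k j * S i l + s⁻¹ * S k i * S j l := fun k l => by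
    simp only [mulVec_single, MulOpposite.op_one, one_smul, single_vecMul, neg_smul,
      vecMulVec_neg, vecMulVec_smul, sub_neg_eq_add, add_apply, hT₁, smul_apply, vecMulVec_apply,
      col_apply, hdiag, mul_zero, sub_zero, row_apply, zero_mul, smul_eq_mul, T₂]
    ring
  have h₁ : T₁.rank + 1 = S.rank := S.rank_sub_vecMulVec_add_one (by simp [s, hij])
  have h₂ : T₂.rank + 1 = T₁.rank := T₁.rank_sub_vecMulVec_add_one (by
    simpa [hT₁, hdiag, hskew i j] using inv_mul_cancel₀ hij)
  refine ⟨T₂, ?_, fun k => ?_, by omega⟩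
  · ext k l
    rw [transpose_apply, neg_apply, hT₂, hT₂, hskew k l, hskew j l, hskew k i, hskew i l,
      hskew k j]
    ring
  · rw [hT₂, hdiag, hskew k i, hskew j k]
    ring

theorem Matrix.even_rank_of_transpose_eq_neg {S : Matrix n n K} (hS : Sᵀ = -S)
    (hdiag : ∀ i, S i i = 0) : Even S.rank := by
  classical
  induction hr : S.rank using Nat.strong_induction_on generalizing S with
  | _ r ih =>
    by_cases h0 : S = 0
    · simp [← hr, h0]
    obtain ⟨i, j, hij⟩ : ∃ i j, S i j ≠ 0 := by
      by_contra! h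
      exact h0 (Matrix.ext h)
    obtain ⟨T, hT, hTdiag, hrank⟩ := exists_rank_add_two_of_transpose_eq_neg hS hdiag hij
    rw [← hr, ← hrank]
    exact (ih T.rank (by omega) hT hTdiag rfl).add (by decide)

end Alternating

section SymmetricParity

variable {n : Type*} [Fintype n]

theorem Matrix.IsSymm.rank_cast_eq_dotProduct_diag {S : Matrix n n (ZMod 2)} (hS : S.IsSymm)
    {c : n → ZMod 2} (hc : S *ᵥ c = S.diag) : (S.rank : ZMod 2) = c ⬝ᵥ S.diag := by
  classical
  set d := S.diag
  have hcS : c ᵥ* S = d := by rw [← mulVec_transpose, hS.eq, hc]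
  -- `S - d dᵀ` is alternating, since `d k * d k = d k` over `𝔽₂`
  set S' := S - vecMulVec d d
  have hS'c : S' *ᵥ c = (1 - d ⬝ᵥ c) • d := by
    simp [S', sub_mulVec, vecMulVec_mulVec, hc, sub_smul]
  have heven : Even S'.rank := by
    refine even_rank_of_transpose_eq_neg ?_ fun k => ?_
    · ext k l
      simpa [S', hS.apply k l, vecMulVec_apply, mul_comm] using
        (by decide : ∀ a b : ZMod 2, a - b = b - a) _ _
    · have : ∀ x : ZMod 2, x - x * x = 0 := by decide
      simpa [S', vecMulVec_apply, d] using this (S k k)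
  rw [dotProduct_comm]
  rcases (by decide : ∀ x : ZMod 2, x = 0 ∨ x = 1) (d ⬝ᵥ c) with hdc | hdc
  · have hfactor : S = S' * (1 + vecMulVec c d) := by
      rw [Matrix.mul_add, Matrix.mul_one, mul_vecMulVec, hS'c, hdc, sub_zero, one_smul,
        sub_add_cancel]
    have hinv : (1 + vecMulVec c d) * (1 - vecMulVec c d) = 1 := by
      simp [Matrix.mul_sub, Matrix.add_mul, vecMulVec_mul_vecMulVec, hdc]
    rw [hdc, hfactor, rank_mul_eq_left_of_isUnit_det _ _ (isUnit_det_of_right_inverse hinv),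
      ZMod.natCast_eq_zero_iff_even.2 heven]
  · have hrank := S.rank_sub_vecMulVec_add_one (x := c) (y := c) (by rw [hc, dotProduct_comm, hdc])
    rw [hc, hcS] at hrank
    rw [hdc, ← hrank, Nat.cast_succ, ZMod.natCast_eq_zero_iff_even.2 heven, zero_add]

end SymmetricParity

lemma ite_mul_eq_one_eq_add {x y : ℤ} (hx : x = 1 ∨ x = -1) (hy : y = 1 ∨ y = -1) :
    (if x * y = 1 then 0 else 1 : ZMod 2) =
      (if x = 1 then 0 else 1) + (if y = 1 then 0 else 1) := by
  rcases hx with rfl | rfl <;> rcases hy with rfl | rfl <;> decide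

lemma jacobiSym.eq_one_or_neg_one_of_isCoprime {a : ℤ} {m : ℕ} (h : IsCoprime a m) :
    jacobiSym a m = 1 ∨ jacobiSym a m = -1 :=
  jacobiSym.eq_one_or_neg_one (Int.isCoprime_iff_gcd_eq_one.mp h)

lemma addLeg_mul_left {a b : ℤ} {m : ℕ} (ha : IsCoprime a m) (hb : IsCoprime b m) :
    addLeg (a * b) m = addLeg a m + addLeg b m := by
  unfold addLeg
  rw [jacobiSym.mul_left]
  exact ite_mul_eq_one_eq_add (jacobiSym.eq_one_or_neg_one_of_isCoprime ha)
    (jacobiSym.eq_one_or_neg_one_of_isCoprime hb)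

lemma addLeg_mul_right {a : ℤ} {m n : ℕ} (hm : m ≠ 0) (hn : n ≠ 0) (ham : IsCoprime a m)
    (han : IsCoprime a n) : addLeg a (m * n) = addLeg a m + addLeg a n := by
  unfold addLeg
  rw [jacobiSym.mul_right' a hm hn]
  exact ite_mul_eq_one_eq_add (jacobiSym.eq_one_or_neg_one_of_isCoprime ham)
    (jacobiSym.eq_one_or_neg_one_of_isCoprime han)

lemma addLeg_prod {ι : Type*} (s : Finset ι) {f : ι → ℕ} {a : ℤ} (hf : ∀ i ∈ s, f i ≠ 0)
    (ha : ∀ i ∈ s, IsCoprime a (f i)) : addLeg a (∏ i ∈ s, f i) = ∑ i ∈ s, addLeg a (f i) := by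
  classical
  induction s using Finset.induction_on with
  | empty => simp [addLeg]
  | insert i s hi ih =>
    simp only [Finset.mem_insert, forall_eq_or_imp] at hf ha
    rw [Finset.prod_insert hi, Finset.sum_insert hi, ← ih hf.2 ha.2,
      addLeg_mul_right hf.1 (Finset.prod_ne_zero_iff.2 hf.2) ha.1
        (by simpa using IsCoprime.prod_right ha.2)]

lemma ite_neg_one_pow_eq_one_eq_natCast (k : ℕ) :
    (if (-1 : ℤ) ^ k = 1 then 0 else 1 : ZMod 2) = k := by
  rcases Nat.even_or_odd k with hk | hk
  · rw [hk.neg_one_pow, if_pos rfl, ZMod.natCast_eq_zero_iff_even.2 hk]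
  · rw [hk.neg_one_pow, if_neg (by decide), ZMod.natCast_eq_one_iff_odd.2 hk]

lemma addLeg_neg_one {m : ℕ} (hm : Odd m) : addLeg (-1) m = (m / 2 : ℕ) := by
  rw [addLeg, jacobiSym.at_neg_one hm, ZMod.χ₄_eq_neg_one_pow (Nat.odd_iff.mp hm),
    ite_neg_one_pow_eq_one_eq_natCast]

lemma addLeg_add_addLeg {m n : ℕ} (hm : Odd m) (hn : Odd n) (h : Nat.Coprime m n) :
    addLeg m n + addLeg n m = addLeg (-1) m * addLeg (-1) n := by
  have hnm : IsCoprime (n : ℤ) m := Nat.isCoprime_iff_coprime.2 h.symm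
  have hrec : addLeg m n = (m / 2 * (n / 2) : ℕ) + addLeg n m := by
    rw [addLeg, jacobiSym.quadratic_reciprocity hm hn,
      ite_mul_eq_one_eq_add (neg_one_pow_eq_or ℤ _) (jacobiSym.eq_one_or_neg_one_of_isCoprime hnm),
      ite_neg_one_pow_eq_one_eq_natCast]
    rfl
  rw [hrec, addLeg_neg_one hm, addLeg_neg_one hn, add_assoc, CharTwo.add_self_eq_zero, add_zero,
    Nat.cast_mul]

lemma addLeg_neg_one_of_mod_four {n : ℕ} (h : n % 4 = 1) : addLeg (-1) n = 0 := by
  rw [addLeg, jacobiSym.mod_right _ (Nat.odd_iff.2 (by omega))]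
  norm_num [h]

lemma addLeg_neg_three_of_mod_three_eq_one {n : ℕ} (h4 : n % 4 = 1) (h3 : n % 3 = 1) :
    addLeg (-3) n = 0 := by
  rw [addLeg, jacobiSym.mod_right _ (Nat.odd_iff.2 (by omega)), show n % _ = 1 by norm_num; omega]
  norm_num

lemma addLeg_neg_three_of_mod_three_eq_two {n : ℕ} (h4 : n % 4 = 1) (h3 : n % 3 = 2) :
    addLeg (-3) n = 1 := by
  rw [addLeg, jacobiSym.mod_right _ (Nat.odd_iff.2 (by omega)), show n % _ = 5 by norm_num; omega]
  norm_num

section Redei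

variable {t : ℕ} (p : Fin t → ℕ)

lemma redeiMatrix_mulVec_one : redeiMatrix p *ᵥ 1 = 0 := by
  funext i
  have hoff : ∑ j ∈ Finset.univ.erase i, redeiMatrix p i j =
      ∑ j ∈ Finset.univ.erase i, addLeg (p j) (p i) :=
    Finset.sum_congr rfl fun j hj => if_neg (Finset.ne_of_mem_erase hj).symm
  simp only [mulVec, dotProduct, Pi.one_apply, mul_one, Pi.zero_apply]
  have hdiag : redeiMatrix p i i = ∑ j ∈ Finset.univ.erase i, addLeg (p j) (p i) := if_pos rfl
  rw [← Finset.add_sum_erase _ _ (Finset.mem_univ i), hoff, hdiag, CharTwo.add_self_eq_zero]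

variable {p}

lemma redeiMatrix_transpose (hp : ∀ i, (p i).Prime) (hinj : Function.Injective p)
    (h2 : ∀ i, p i ≠ 2) :
    (redeiMatrix p)ᵀ = redeiMatrix p + diagonal (rvec p (-1)) +
      vecMulVec (rvec p (-1)) (rvec p (-1)) := by
  have hodd i : Odd (p i) := (hp i).odd_of_ne_two (h2 i)
  ext i j
  rcases eq_or_ne i j with rfl | hij
  · simpa [vecMulVec_apply, add_assoc] using (by decide : ∀ x : ZMod 2, x + x * x = 0) _
  · have hrec := addLeg_add_addLeg (hodd i) (hodd j)
      ((Nat.coprime_primes (hp i) (hp j)).2 (hinj.ne hij))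
    simp only [redeiMatrix, transpose_apply, of_apply, hij, hij.symm, ↓reduceIte, Matrix.add_apply,
      ne_eq, not_false_eq_true, diagonal_apply_ne, add_zero, vecMulVec_apply, rvec]
    grind

lemma isCoprime_three_of_prime {q : ℕ} (hq : q.Prime) (h3 : q ≠ 3) : IsCoprime (3 : ℤ) q := by
  exact_mod_cast Nat.isCoprime_iff_coprime.2 ((Nat.coprime_primes Nat.prime_three hq).2 h3.symm)

lemma sum_rvec (hp : ∀ i, (p i).Prime) {d : ℤ} (hd : ∀ i, IsCoprime d (p i)) :
    ∑ i, rvec p d i = addLeg d (∏ i, p i) :=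
  (addLeg_prod _ (fun i _ => (hp i).ne_zero) fun i _ => hd i).symm

lemma rvec_neg_three (hp : ∀ i, (p i).Prime) (h3 : ∀ i, p i ≠ 3) :
    rvec p (-3) = rvec p (-1) + rvec p 3 := by
  funext i
  rw [Pi.add_apply, rvec, rvec, rvec, show (-3 : ℤ) = -1 * 3 by norm_num]
  exact addLeg_mul_left isCoprime_one_left.neg_left (isCoprime_three_of_prime (hp i) (h3 i))

end Redei

section MonskyMatrix

variable {t : ℕ}

def monskyMatrix (e : ZMod 2) (A : Matrix (Fin t) (Fin t) (ZMod 2)) (ε β γ δ : Fin t → ZMod 2) :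
    Matrix (Fin 6 ⊕ Fin t ⊕ Fin t) (Fin 6 ⊕ Fin t ⊕ Fin t) (ZMod 2) :=
  Matrix.of fun i j =>
    match i, j with
    | .inl i, .inl j => scalarBlockA1 e i j
    | .inl i, .inr (.inl j) => if i = 3 then ε j else if i = 4 then δ j else 0
    | .inl i, .inr (.inr j) => if i = 1 then ε j else if i = 3 then β j else 0
    | .inr (.inl i), .inl j =>
      if j = 3 then ε i else if j = 4 then β i else if j = 5 then γ i else 0
    | .inr (.inl i), .inr (.inl j) => diagonal δ i j
    | .inr (.inl i), .inr (.inr j) => A i j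
    | .inr (.inr i), .inl j =>
      if j = 0 then ε i else if j = 1 then β i else if j = 2 then γ i else 0
    | .inr (.inr i), .inr (.inl j) => (A + diagonal ε) i j
    | .inr (.inr _), .inr (.inr _) => 0

lemma monskyA1_eq_monskyMatrix (p : Fin t → ℕ) :
    monskyA1 p = monskyMatrix (addLeg (-3) (∏ k, p k)) (redeiMatrix p) (rvec p (-1)) (rvec p 2)
      (rvec p 3) (rvec p (-3)) := by
  ext (i | i | i) (j | j | j) <;> rfl

def monskySymmetric (e : ZMod 2) (A : Matrix (Fin t) (Fin t) (ZMod 2))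
    (ε β γ δ : Fin t → ZMod 2) : Matrix (Fin 6 ⊕ Fin t ⊕ Fin t) (Fin 6 ⊕ Fin t ⊕ Fin t) (ZMod 2) :=
  Matrix.of fun i j =>
    match i, j with
    | .inl i, .inl j =>
      !![1,1,0,0,0,0; 1,0,0,1,1,0; 0,0,1,0,0,0; 0,1,0,1,1,0; 0,1,0,1,1+e,0; 0,0,0,0,0,1] i j
    | .inl i, .inr (.inl j) => if i = 0 then ε j else if i = 4 then γ j else 0
    | .inl i, .inr (.inr j) => if i = 1 then ε j else if i = 3 then β j else 0
    | .inr (.inl i), .inl j => if j = 0 then ε i else if j = 4 then γ i else 0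
    | .inr (.inl i), .inr (.inl j) => diagonal δ i j
    | .inr (.inl i), .inr (.inr j) => A i j
    | .inr (.inr i), .inl j => if j = 1 then ε i else if j = 3 then β i else 0
    | .inr (.inr i), .inr (.inl j) => Aᵀ i j
    | .inr (.inr _), .inr (.inr _) => 0

/-- Right multiplication by this matrix moves scalar column `π k` to position `k`, for
`π = (0 3 1)(2 4 5)`, which pairs each scalar row with the scalar column carrying the transposed
border; it also adds `ε j` times scalar column `0` to the `y`-column `j`, which cancels the
defect `ε εᵀ` of the block `A + D_ε = Aᵀ + ε εᵀ`. -/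
def monskyColOp (ε : Fin t → ZMod 2) :
    Matrix (Fin 6 ⊕ Fin t ⊕ Fin t) (Fin 6 ⊕ Fin t ⊕ Fin t) (ZMod 2) :=
  Matrix.of fun i j =>
    match i, j with
    | .inl i, .inl j =>
      !![0,1,0,0,0,0; 0,0,0,1,0,0; 0,0,0,0,0,1; 1,0,0,0,0,0; 0,0,1,0,0,0; 0,0,0,0,1,0] i j
    | .inl i, .inr (.inl j) => if i = 0 then ε j else 0
    | .inl _, .inr (.inr _) => 0
    | .inr _, .inl _ => 0
    | .inr i, .inr j => (1 : Matrix (Fin t ⊕ Fin t) (Fin t ⊕ Fin t) (ZMod 2)) i j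

def monskyColOpInv (ε : Fin t → ZMod 2) :
    Matrix (Fin 6 ⊕ Fin t ⊕ Fin t) (Fin 6 ⊕ Fin t ⊕ Fin t) (ZMod 2) :=
  Matrix.of fun i j =>
    match i, j with
    | .inl i, .inl j =>
      !![0,0,0,1,0,0; 1,0,0,0,0,0; 0,0,0,0,1,0; 0,1,0,0,0,0; 0,0,0,0,0,1; 0,0,1,0,0,0] i j
    | .inl i, .inr (.inl j) => if i = 1 then ε j else 0
    | .inl _, .inr (.inr _) => 0
    | .inr _, .inl _ => 0
    | .inr i, .inr j => (1 : Matrix (Fin t ⊕ Fin t) (Fin t ⊕ Fin t) (ZMod 2)) i j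

def monskyRowOp (β γ : Fin t → ZMod 2) :
    Matrix (Fin 6 ⊕ Fin t ⊕ Fin t) (Fin 6 ⊕ Fin t ⊕ Fin t) (ZMod 2) :=
  Matrix.of fun i j =>
    match i, j with
    | .inl i, .inl j => if i = 3 ∧ j = 5 then 1 else (1 : Matrix (Fin 6) (Fin 6) (ZMod 2)) i j
    | .inl _, .inr _ => 0
    | .inr (.inl i), .inl j => if j = 2 then β i else 0
    | .inr (.inr i), .inl j => if j = 5 then γ i else 0
    | .inr i, .inr j => (1 : Matrix (Fin t ⊕ Fin t) (Fin t ⊕ Fin t) (ZMod 2)) i j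

lemma monskyColOp_mul_inv (ε : Fin t → ZMod 2) : monskyColOp ε * monskyColOpInv ε = 1 := by
  ext (i | i | i) (j | j | j)
  all_goals (try fin_cases i) <;> (try fin_cases j) <;>
    simp [Matrix.mul_apply, Fintype.sum_sum_type, Fin.sum_univ_six, monskyColOp, monskyColOpInv,
      Matrix.one_apply, CharTwo.add_self_eq_zero]

lemma monskyRowOp_mul_self (β γ : Fin t → ZMod 2) : monskyRowOp β γ * monskyRowOp β γ = 1 := by
  ext (i | i | i) (j | j | j)
  all_goals (try fin_cases i) <;> (try fin_cases j) <;>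
    simp [Matrix.mul_apply, Fintype.sum_sum_type, Fin.sum_univ_six, monskyRowOp, Matrix.one_apply,
      CharTwo.add_self_eq_zero]

lemma monskyMatrix_mul_colOp {A : Matrix (Fin t) (Fin t) (ZMod 2)} {ε β γ : Fin t → ZMod 2}
    (hA : Aᵀ = A + diagonal ε + vecMulVec ε ε) :
    monskyMatrix (∑ i, γ i) A ε β γ (ε + γ) * monskyColOp ε =
      monskyRowOp β γ * monskySymmetric (∑ i, γ i) A ε β γ (ε + γ) := by
  simp only [monskySymmetric, hA]
  ext (i | i | i) (j | j | j)
  all_goals (try fin_cases i) <;> (try fin_cases j) <;>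
    simp [Matrix.mul_apply, Fintype.sum_sum_type, Fin.sum_univ_six, monskyMatrix, monskyColOp,
      monskyRowOp, scalarBlockA1, Matrix.one_apply, Matrix.diagonal_apply, vecMulVec_apply,
      CharTwo.add_self_eq_zero, CharTwo.add_cancel_left] <;> ring

lemma monskySymmetric_isSymm (e : ZMod 2) (A : Matrix (Fin t) (Fin t) (ZMod 2))
    (ε β γ δ : Fin t → ZMod 2) : (monskySymmetric e A ε β γ δ).IsSymm := by
  ext (i | i | i) (j | j | j)
  all_goals (try fin_cases i) <;> (try fin_cases j) <;>
    simp [monskySymmetric, Matrix.diagonal_apply, eq_comm]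
  grind

lemma monskySymmetric_mulVec {A : Matrix (Fin t) (Fin t) (ZMod 2)} {ε β γ δ : Fin t → ZMod 2}
    (hcol : 1 ᵥ* A = ε) (hε : ∑ i, ε i = 0) :
    monskySymmetric (∑ i, γ i) A ε β γ δ *ᵥ Sum.elim ![0, 1, 1, 0, 0, 1] (Sum.elim 1 0) =
      (monskySymmetric (∑ i, γ i) A ε β γ δ).diag := by
  have hcol' : ∀ i, ∑ k, A k i = ε i := fun i => by simp [← hcol, vecMul, dotProduct]
  ext (i | i | i)
  all_goals (try fin_cases i) <;>
    simp [mulVec, dotProduct, Fintype.sum_sum_type, Fin.sum_univ_six, monskySymmetric,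
      Matrix.diagonal_apply, hε, hcol', CharTwo.add_self_eq_zero]

lemma dotProduct_diag_monskySymmetric (e : ZMod 2) (A : Matrix (Fin t) (Fin t) (ZMod 2))
    (ε β γ δ : Fin t → ZMod 2) :
    Sum.elim ![0, 1, 1, 0, 0, 1] (Sum.elim 1 0) ⬝ᵥ (monskySymmetric e A ε β γ δ).diag =
      ∑ i, δ i := by
  simp [dotProduct, Fintype.sum_sum_type, Fin.sum_univ_six, monskySymmetric,
    CharTwo.add_self_eq_zero]

theorem monskyMatrix_rank_cast {e : ZMod 2} {A : Matrix (Fin t) (Fin t) (ZMod 2)}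
    {ε β γ δ : Fin t → ZMod 2} (hA : Aᵀ = A + diagonal ε + vecMulVec ε ε) (hrow : A *ᵥ 1 = 0)
    (hε : ∑ i, ε i = 0) (hδ : δ = ε + γ) (he : ∑ i, γ i = e) :
    ((monskyMatrix e A ε β γ δ).rank : ZMod 2) = e := by
  subst hδ he
  have hcol : 1 ᵥ* A = ε := by
    rw [← mulVec_transpose, hA, add_mulVec, add_mulVec, hrow, vecMulVec_mulVec]
    ext i
    simp [mulVec_diagonal, dotProduct, hε]
  rw [← rank_mul_eq_left_of_isUnit_det _ _ (isUnit_det_of_right_inverse (monskyColOp_mul_inv ε)),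
    monskyMatrix_mul_colOp hA,
    rank_mul_eq_right_of_isUnit_det _ _ (isUnit_det_of_right_inverse (monskyRowOp_mul_self β γ)),
    (monskySymmetric_isSymm ..).rank_cast_eq_dotProduct_diag (monskySymmetric_mulVec hcol hε),
    dotProduct_diag_monskySymmetric]
  simp only [Pi.add_apply, Finset.sum_add_distrib, hε, zero_add]

end MonskyMatrix

/-- For `ñ = p₁⋯p_t ≡ 1 (mod 8)` a product of distinct primes `≠ 2,3`, the rank
of the Monsky matrix `A₁` over `𝔽₂` is even if `ñ ≡ 1 (mod 3)` and odd if
`ñ ≡ 2 (mod 3)`. -/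
theorem monskyA1_rank_parity {t : ℕ} (p : Fin t → ℕ)
    (hp : ∀ i, (p i).Prime) (hinj : Function.Injective p)
    (h2 : ∀ i, p i ≠ 2) (h3 : ∀ i, p i ≠ 3)
    (h8 : (∏ k, p k) % 8 = 1) :
    ((∏ k, p k) % 3 = 1 → Even (monskyA1 p).rank) ∧
    ((∏ k, p k) % 3 = 2 → Odd (monskyA1 p).rank) := by
  have h4 : (∏ k, p k) % 4 = 1 := by omega
  have hε : ∑ i, rvec p (-1) i = 0 := by
    rw [sum_rvec hp fun _ => isCoprime_one_left.neg_left, addLeg_neg_one_of_mod_four h4]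
  have hδ := rvec_neg_three hp h3
  have he : ∑ i, rvec p 3 i = addLeg (-3) (∏ k, p k) := by
    rw [← sum_rvec hp fun i => (isCoprime_three_of_prime (hp i) (h3 i)).neg_left, hδ]
    simp only [Pi.add_apply, Finset.sum_add_distrib, hε, zero_add]
  have hrank : ((monskyA1 p).rank : ZMod 2) = addLeg (-3) (∏ k, p k) := by
    rw [monskyA1_eq_monskyMatrix]
    exact monskyMatrix_rank_cast (redeiMatrix_transpose hp hinj h2) (redeiMatrix_mulVec_one p)
      hε hδ he
  refine ⟨fun h => ZMod.natCast_eq_zero_iff_even.1 ?_, fun h => ZMod.natCast_eq_one_iff_odd.1 ?_⟩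
  · rw [hrank, addLeg_neg_three_of_mod_three_eq_one h4 h]
  · rw [hrank, addLeg_neg_three_of_mod_three_eq_two h4 h]
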